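/- Let X be a topological space and let C₀ ⊆ 𝓛X be a d-dense subcone: C₀ is closed under pointwise addition and ℝ≥0-scalar multiplication, and the only subset S of 𝓛X with C₀ ⊆ S that is closed under addition, ℝ≥0-scalar multiplication, and pointwise suprema of nonempty pointwise-directed subsets is S = 𝓛X. Endow 𝓥X with the topology generated by the sets {μ ∈ 𝓥X | (r:ℝ≥0∞) < μ(f)} for f ∈ C₀ and r : ℝ≥0. Then every sublinear functional φ : 𝓥X → ℝ≥0∞ that is lower semicontinuous for this topology satisfies, for every μ ∈ 𝓥X, φ(μ) = ⨆ (f : C₀) (_ : ∀ ν ∈ 𝓥X, ν(f) ≤ φ(ν)), μ(f). -/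

import Mathlib

open scoped ENNReal NNReal Topology

/-- `𝓛X`: the cone of lower semicontinuous functions `X → ℝ≥0∞`,
ordered pointwise. -/
abbrev LSCFun (X : Type*) [TopologicalSpace X] := {f : X → ℝ≥0∞ // LowerSemicontinuous f}

namespace LSCFun

variable {X : Type*} [TopologicalSpace X]

/-- Pointwise addition on `𝓛X`. -/
noncomputable instance : Add (LSCFun X) := ⟨fun f g => ⟨f.1 + g.1, f.2.add g.2⟩⟩

/-- Pointwise scalar multiplication by nonnegative reals on `𝓛X`. -/
noncomputable instance : SMul ℝ≥0 (LSCFun X) :=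
  ⟨fun r f => ⟨fun x => (r : ℝ≥0∞) * f.1 x,
    (ENNReal.continuous_const_mul (by simp)).comp_lowerSemicontinuous f.2
      fun _ _ hab => mul_le_mul_of_nonneg_left hab zero_le⟩⟩

/-- The pointwise supremum of a set of lower semicontinuous functions,
again lower semicontinuous. -/
noncomputable def supOf (S : Set (LSCFun X)) : LSCFun X :=
  ⟨fun x => ⨆ f ∈ S, f.1 x, by
    simp only [iSup_subtype']
    exact lowerSemicontinuous_iSup fun f => f.1.2⟩

/-- Scott continuity of a functional `μ : 𝓛X → ℝ≥0∞`: `μ` preserves pointwise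
suprema of nonempty (pointwise-)directed families in `𝓛X`. -/
def ScottCont (μ : LSCFun X → ℝ≥0∞) : Prop :=
  ∀ S : Set (LSCFun X), S.Nonempty → DirectedOn (· ≤ ·) S →
    μ (supOf S) = ⨆ f ∈ S, μ f

end LSCFun

/-- `𝓥X`: the valuation powerdomain, consisting of the linear Scott-continuous
functionals `μ : 𝓛X → ℝ≥0∞`. -/
def ValuationPD (X : Type*) [TopologicalSpace X] : Set ((LSCFun X) → ℝ≥0∞) :=
  {μ | (∀ f g : LSCFun X, μ (f + g) = μ f + μ g) ∧
       (∀ (r : ℝ≥0) (f : LSCFun X), μ (r • f) = (r : ℝ≥0∞) * μ f) ∧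
       LSCFun.ScottCont μ}

/-- The weak*upper topology on `𝓥X`, generated by the subbasic open sets
`{μ | r < μ(f)}` for `f ∈ 𝓛X` and `r : ℝ≥0`. -/
def weakStarUpper (X : Type*) [TopologicalSpace X] : TopologicalSpace (ValuationPD X) :=
  TopologicalSpace.generateFrom
    {S | ∃ (f : LSCFun X) (r : ℝ≥0), S = {μ : ValuationPD X | (r : ℝ≥0∞) < μ.1 f}}

/-!
Given `r < φ μ`, lower semicontinuity yields finitely many `g_p ∈ C₀` and `s_p : ℝ≥0` with
`s_p < μ g_p` such that `s_p < ν g_p` for all `p` forces `r < φ ν`. Hence the image of the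
convex set `{ν | φ ν ≤ r}` under `ν ↦ (ν g_p)_p` misses the open orthant above `s`, and
Hahn–Banach gives weights `c ≠ 0` with `∑ c_p ν g_p ≤ ∑ c_p s_p` whenever `φ ν ≤ r`. Since `φ`
is positively homogeneous, a suitable multiple of `∑ c_p • g_p ∈ C₀` then lies below `φ` while
exceeding `r` at `μ`.
-/

section

open Filter Set

theorem exists_finset_subset_of_isOpen_generateFrom {V F : Type*} [FunLike F V ℝ≥0∞] {Λ : Set F}
    {U : Set V} (hU : IsOpen[TopologicalSpace.generateFrom
      {S | ∃ ℓ ∈ Λ, ∃ s : ℝ≥0, S = {v | (s : ℝ≥0∞) < ℓ v}}] U) {v : V} (hv : v ∈ U) :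
    ∃ B : Finset (F × ℝ≥0), (∀ p ∈ B, p.1 ∈ Λ ∧ (p.2 : ℝ≥0∞) < p.1 v) ∧
      {w | ∀ p ∈ B, (p.2 : ℝ≥0∞) < p.1 w} ⊆ U := by
  classical
  induction hU generalizing v with
  | basic S hS =>
    obtain ⟨ℓ, hℓ, s, rfl⟩ := hS
    exact ⟨{(ℓ, s)}, by simpa using ⟨hℓ, hv⟩, fun w hw => by simpa using hw⟩
  | univ => exact ⟨∅, by simp, subset_univ _⟩
  | inter S T _ _ ihS ihT =>
    obtain ⟨B, hBv, hBS⟩ := ihS hv.1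
    obtain ⟨C, hCv, hCT⟩ := ihT hv.2
    refine ⟨B ∪ C, fun p hp => ?_, fun w hw => ⟨hBS ?_, hCT ?_⟩⟩
    · exact (Finset.mem_union.1 hp).elim (hBv p) (hCv p)
    · exact fun p hp => hw p (Finset.mem_union_left _ hp)
    · exact fun p hp => hw p (Finset.mem_union_right _ hp)
  | sUnion K _ ih =>
    obtain ⟨S, hSK, hvS⟩ := hv
    obtain ⟨B, hBv, hBS⟩ := ih S hSK hvS
    exact ⟨B, hBv, hBS.trans (subset_sUnion_of_mem hSK)⟩

theorem exists_nonneg_sum_mul_le_of_isLowerSet {ι : Type*} [Fintype ι] {K : Set (ι → ℝ)}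
    (hconv : Convex ℝ K) (hlow : IsLowerSet K) (hne : K.Nonempty) {s : ι → ℝ}
    (hs : ∀ x ∈ K, ∃ i, x i ≤ s i) :
    ∃ c : ι → ℝ≥0, c ≠ 0 ∧ ∀ x ∈ K, ∑ i, (c i : ℝ) * x i ≤ ∑ i, (c i : ℝ) * s i := by
  classical
  set B : Set (ι → ℝ) := univ.pi fun i => Ioi (s i)
  have hdisj : Disjoint B K := disjoint_left.2 fun x hxB hxK => by
    obtain ⟨i, hi⟩ := hs x hxK
    exact (hi.trans_lt (hxB i trivial)).false
  obtain ⟨f, u, hfB, hfK⟩ := geometric_hahn_banach_open (convex_pi fun i _ => convex_Ioi (s i))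
    (isOpen_set_pi finite_univ fun i _ => isOpen_Ioi) hconv hdisj
  set e : ι → ι → ℝ := fun i j => if i = j then 1 else 0
  set c : ι → ℝ := fun i => -f (e i)
  have hf : ∀ x, f x = -∑ i, c i * x i := fun x => by
    rw [show f x = f.toLinearMap x from rfl, LinearMap.pi_apply_eq_sum_univ]
    simp [c, e, mul_comm]
  obtain ⟨x₀, hx₀⟩ := hne
  -- `f ≥ u` on the ray `x₀ - t • e i` (`t ≥ 0`), which lies in the lower set `K`.
  have hc : ∀ i, 0 ≤ c i := fun i => by
    by_contra! hneg
    set t := (f x₀ - u + 1) / -c i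
    have ht : 0 ≤ t := div_nonneg (by linarith [hfK x₀ hx₀]) (by linarith)
    have hmem : x₀ - t • e i ∈ K :=
      hlow (sub_le_self _ (smul_nonneg ht fun j => by simp only [e]; split_ifs <;> norm_num)) hx₀
    have htc : t * -c i = f x₀ - u + 1 := div_mul_cancel₀ _ (neg_pos.2 hneg).ne'
    have := hfK _ hmem
    rw [map_sub, map_smul, smul_eq_mul, show f (e i) = -c i from (neg_neg _).symm] at this
    linarith
  have hsep : ∀ x ∈ K, ∀ b ∈ B, ∑ i, c i * x i < ∑ i, c i * b i := fun x hx b hb => by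
    linarith [hfB b hb, hfK x hx, hf x, hf b]
  refine ⟨fun i => ⟨c i, hc i⟩, fun hc0 => ?_, fun x hx => ?_⟩
  · have hc0 : ∀ i, c i = 0 := fun i => congrArg NNReal.toReal (congrFun hc0 i)
    simpa [hc0] using hsep x₀ hx₀ (s + 1) fun i _ => by simp
  · have hlim : Tendsto (fun δ : ℝ => ∑ i, c i * (s i + δ)) (𝓝[>] 0) (𝓝 (∑ i, c i * s i)) :=
      ((continuous_finsetSum _ fun i _ => by fun_prop).tendsto' 0 _
        (by simp only [add_zero])).mono_left nhdsWithin_le_nhds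
    exact ge_of_tendsto hlim (eventually_nhdsWithin_of_forall fun δ hδ =>
      (hsep x hx _ fun i _ => lt_add_of_pos_right (s i) hδ).le)

theorem ENNReal.exists_nonneg_sum_mul_le_of_convex {ι : Type*} [Fintype ι] {A : Set (ι → ℝ≥0∞)}
    (hconv : Convex ℝ≥0 A) (hne : A.Nonempty) {s : ι → ℝ≥0} (hs : ∀ y ∈ A, ∃ i, y i ≤ s i) :
    ∃ c : ι → ℝ≥0, c ≠ 0 ∧ ∀ y ∈ A, ∑ i, (c i : ℝ≥0∞) * y i ≤ ∑ i, (c i : ℝ≥0∞) * s i := by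
  set K : Set (ι → ℝ) := {x | ∃ y ∈ A, ∀ i, ENNReal.ofReal (x i) ≤ y i}
  have hK : Convex ℝ K := by
    rintro x ⟨y, hy, hxy⟩ x' ⟨y', hy', hxy'⟩ a b ha hb hab
    refine ⟨a.toNNReal • y + b.toNNReal • y', hconv hy hy' zero_le zero_le ?_, fun i => ?_⟩
    · rw [← Real.toNNReal_add ha hb, hab, Real.toNNReal_one]
    · calc ENNReal.ofReal (a * x i + b * x' i)
          ≤ ENNReal.ofReal a * ENNReal.ofReal (x i) + ENNReal.ofReal b * ENNReal.ofReal (x' i) := by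
            rw [← ENNReal.ofReal_mul ha, ← ENNReal.ofReal_mul hb]
            exact ENNReal.ofReal_add_le
        _ ≤ _ := by
            show _ ≤ (a.toNNReal : ℝ≥0∞) * y i + (b.toNNReal : ℝ≥0∞) * y' i
            gcongr
            exacts [le_rfl, hxy i, le_rfl, hxy' i]
  obtain ⟨c, hc0, hc⟩ := exists_nonneg_sum_mul_le_of_isLowerSet hK
    (fun x x' hle ⟨y, hy, h⟩ => ⟨y, hy, fun i => (ENNReal.ofReal_le_ofReal (hle i)).trans (h i)⟩)
    (hne.elim fun y hy => ⟨0, y, hy, by simp⟩)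
    (s := fun i => (s i : ℝ)) fun x ⟨y, hy, h⟩ =>
      (hs y hy).imp fun i hi => ENNReal.ofReal_le_coe.1 ((h i).trans hi)
  refine ⟨c, hc0, fun y hy => ?_⟩
  have htrunc : ∀ n : ℕ, ∑ i, (c i : ℝ≥0∞) * (y i ⊓ n) ≤ ∑ i, (c i : ℝ≥0∞) * s i := fun n => by
    have hfin : ∀ i, y i ⊓ n ≠ ⊤ := fun i => (inf_le_right.trans_lt (ENNReal.natCast_lt_top n)).ne
    have := hc (fun i => (y i ⊓ n).toReal)
      ⟨y, hy, fun i => by rw [ENNReal.ofReal_toReal (hfin i)]; exact inf_le_left⟩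
    rw [← ENNReal.ofReal_le_ofReal_iff (by positivity), ENNReal.ofReal_sum_of_nonneg
      (fun i _ => by positivity), ENNReal.ofReal_sum_of_nonneg (fun i _ => by positivity)] at this
    simpa [ENNReal.ofReal_mul, hfin] using this
  calc ∑ i, (c i : ℝ≥0∞) * y i = ∑ i, ⨆ n : ℕ, (c i : ℝ≥0∞) * (y i ⊓ n) := by
        simp only [← ENNReal.mul_iSup, ← inf_iSup_eq, ENNReal.iSup_natCast, inf_top_eq]
    _ = ⨆ n : ℕ, ∑ i, (c i : ℝ≥0∞) * (y i ⊓ n) :=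
        ENNReal.finsetSum_iSup_of_monotone fun i m n hmn => by gcongr
    _ ≤ _ := iSup_le htrunc

theorem mul_le_mul_of_forall_le_imp_le {M : Type*} [SMul ℝ≥0 M] {φ T : M → ℝ≥0∞}
    (hφ : ∀ (k : ℝ≥0) x, φ (k • x) = k * φ x) (hT : ∀ (k : ℝ≥0) x, T (k • x) = k * T x)
    {r S S' : ℝ≥0} (hS : S < S') (h : ∀ x, φ x ≤ r → T x ≤ S) (x : M) :
    r * T x ≤ S' * φ x := by
  rcases eq_or_ne (φ x) ⊤ with htop | hfin
  · rw [htop, ENNReal.mul_top (by exact_mod_cast (pos_of_gt hS).ne')]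
    exact le_top
  lift φ x to ℝ≥0 using hfin with q hq
  rcases eq_or_ne q 0 with rfl | hq0
  · -- every multiple of `x` lies in the sublevel set, so `T x` must vanish
    have hTx : T x = 0 := by
      by_contra hTx
      obtain ⟨n, hn⟩ := ENNReal.exists_nat_mul_gt hTx (ENNReal.coe_ne_top (r := S))
      have := h ((n : ℝ≥0) • x) (by simp [hφ, ← hq])
      rw [hT, ENNReal.coe_natCast] at this
      exact (hn.trans_le this).false
    simp [hTx]
  · set k := r / q
    have hk : (k : ℝ≥0∞) * q = r := by rw [← ENNReal.coe_mul, div_mul_cancel₀ r hq0]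
    have := h (k • x) (by rw [hφ, ← hq, hk])
    rw [hT] at this
    calc (r : ℝ≥0∞) * T x = q * (k * T x) := by rw [← hk]; ring
      _ ≤ S' * q := by
        rw [mul_comm (S' : ℝ≥0∞)]
        gcongr
        exact this.trans (by exact_mod_cast hS.le)

theorem convex_setOf_le_of_sublinear {M : Type*} [AddCommMonoid M] [SMul ℝ≥0 M]
    {φ : M → ℝ≥0∞} (hadd : ∀ x y, φ (x + y) ≤ φ x + φ y)
    (hsmul : ∀ (k : ℝ≥0) x, φ (k • x) = k * φ x) (r : ℝ≥0∞) : Convex ℝ≥0 {x | φ x ≤ r} := by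
  intro x hx y hy a b _ _ hab
  calc φ (a • x + b • y) ≤ a * φ x + b * φ y := (hadd _ _).trans_eq (by rw [hsmul, hsmul])
    _ ≤ a * r + b * r := by gcongr <;> assumption
    _ = r := by rw [← add_mul, ← ENNReal.coe_add, hab, ENNReal.coe_one, one_mul]

theorem ENNReal.sum_mul_lt_sum_mul {ι : Type*} [Fintype ι] {c : ι → ℝ≥0} (hc : c ≠ 0)
    {s : ι → ℝ≥0} {y : ι → ℝ≥0∞} (hsy : ∀ i, (s i : ℝ≥0∞) < y i) :
    ∑ i, (c i : ℝ≥0∞) * s i < ∑ i, (c i : ℝ≥0∞) * y i := by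
  classical
  obtain ⟨i, hi⟩ := Function.ne_iff.1 hc
  rw [← Finset.add_sum_erase _ _ (Finset.mem_univ i),
    ← Finset.add_sum_erase _ _ (Finset.mem_univ i)]
  refine ENNReal.add_lt_add_of_lt_of_le (by simp [ENNReal.mul_eq_top])
    (ENNReal.mul_lt_mul_right (by simpa using hi) ENNReal.coe_ne_top (hsy i))
    (Finset.sum_le_sum fun j _ => by gcongr; exact (hsy j).le)

variable {V : Type*} [AddCommMonoid V] [Module ℝ≥0 V] {φ : V → ℝ≥0∞}

theorem exists_nonneg_sum_mul_le_of_sublinear (hadd : ∀ v w, φ (v + w) ≤ φ v + φ w)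
    (hsmul : ∀ (k : ℝ≥0) v, φ (k • v) = k * φ v) {ι : Type*} [Fintype ι]
    (ℓ : ι → V →ₗ[ℝ≥0] ℝ≥0∞) (s : ι → ℝ≥0) {r : ℝ≥0}
    (hbox : ∀ w, (∀ i, (s i : ℝ≥0∞) < ℓ i w) → (r : ℝ≥0∞) < φ w) :
    ∃ c : ι → ℝ≥0, c ≠ 0 ∧
      ∀ w, φ w ≤ r → ∑ i, (c i : ℝ≥0∞) * ℓ i w ≤ ∑ i, (c i : ℝ≥0∞) * s i := by
  have hesc : ∀ y ∈ LinearMap.pi ℓ '' {w | φ w ≤ r}, ∃ i, y i ≤ s i := by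
    rintro _ ⟨w, hw, rfl⟩
    by_contra! hlt
    exact not_lt.2 hw (hbox w hlt)
  have hφ0 : φ 0 = 0 := by simpa using hsmul 0 0
  obtain ⟨c, hc0, hc⟩ := ENNReal.exists_nonneg_sum_mul_le_of_convex
    ((convex_setOf_le_of_sublinear hadd hsmul r).linear_image (LinearMap.pi ℓ))
    ⟨_, 0, by simp [hφ0], rfl⟩ hesc
  exact ⟨c, hc0, fun w hw => hc _ ⟨w, hw, rfl⟩⟩

theorem exists_mem_le_and_le_apply_of_lt {Λ : Set (V →ₗ[ℝ≥0] ℝ≥0∞)}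
    (hΛadd : ∀ ℓ ∈ Λ, ∀ ℓ' ∈ Λ, ℓ + ℓ' ∈ Λ) (hΛsmul : ∀ (k : ℝ≥0), ∀ ℓ ∈ Λ, k • ℓ ∈ Λ)
    (hadd : ∀ v w, φ (v + w) ≤ φ v + φ w) (hsmul : ∀ (k : ℝ≥0) v, φ (k • v) = k * φ v)
    {r : ℝ≥0} (hlsc : IsOpen[TopologicalSpace.generateFrom
      {S | ∃ ℓ ∈ Λ, ∃ s : ℝ≥0, S = {v | (s : ℝ≥0∞) < ℓ v}}] {v | (r : ℝ≥0∞) < φ v})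
    {v : V} (hv : (r : ℝ≥0∞) < φ v) :
    ∃ ℓ ∈ Λ, (∀ w, ℓ w ≤ φ w) ∧ (r : ℝ≥0∞) ≤ ℓ v := by
  obtain ⟨B, hBv, hBφ⟩ := exists_finset_subset_of_isOpen_generateFrom hlsc hv
  obtain ⟨c, hc0, hc⟩ := exists_nonneg_sum_mul_le_of_sublinear hadd hsmul
    (fun p : B => p.1.1) (fun p => p.1.2) fun w hw => hBφ fun p hp => hw ⟨p, hp⟩
  set ℓ₀ : V →ₗ[ℝ≥0] ℝ≥0∞ := ∑ p : B, c p • p.1.1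
  have hℓ₀ : ∀ w, ℓ₀ w = ∑ p : B, c p * p.1.1 w := fun w => by simp [ℓ₀, ENNReal.smul_def]
  have hℓ₀Λ : ℓ₀ ∈ Λ := Finset.sum_induction_nonempty _ _ (fun _ _ hℓ hℓ' => hΛadd _ hℓ _ hℓ')
    (Finset.univ_nonempty_iff.2 (Function.ne_iff.1 hc0).nonempty)
    fun p _ => hΛsmul _ _ (hBv _ p.2).1
  set S : ℝ≥0 := ∑ p : B, c p * p.1.2
  have hS : ∀ w, φ w ≤ r → ℓ₀ w ≤ S := fun w hw => by
    simpa [hℓ₀, S] using hc w hw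
  have hSv : (S : ℝ≥0∞) < ℓ₀ v := by
    simpa [hℓ₀, S] using ENNReal.sum_mul_lt_sum_mul hc0 fun p => (hBv _ p.2).2
  obtain ⟨S', hSS', hS'v⟩ := ENNReal.lt_iff_exists_nnreal_btwn.1 hSv
  have hS'0 : S' ≠ 0 := (pos_of_gt (ENNReal.coe_lt_coe.1 hSS')).ne'
  refine ⟨(r / S') • ℓ₀, hΛsmul _ _ hℓ₀Λ, fun w => ?_, ?_⟩
  · have := mul_le_mul_of_forall_le_imp_le hsmul (map_smul ℓ₀) (ENNReal.coe_lt_coe.1 hSS') hS w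
    rw [LinearMap.smul_apply, ENNReal.smul_def, smul_eq_mul, ENNReal.coe_div hS'0,
      ← ENNReal.mul_div_right_comm]
    exact ENNReal.div_le_of_le_mul (by rwa [mul_comm (φ w)])
  · calc (r : ℝ≥0∞) = ↑(r / S') * S' := by rw [← ENNReal.coe_mul, div_mul_cancel₀ r hS'0]
      _ ≤ ((r / S') • ℓ₀) v := by
        rw [LinearMap.smul_apply, ENNReal.smul_def, smul_eq_mul]
        gcongr

end

namespace ValuationPD

variable {X : Type*} [TopologicalSpace X] {μ ν : LSCFun X → ℝ≥0∞}

theorem monotone (hμ : μ ∈ ValuationPD X) : Monotone μ := by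
  intro f g hfg
  have hsup : LSCFun.supOf {f, g} = g := Subtype.ext <| funext fun x => by
    change ⨆ h ∈ ({f, g} : Set (LSCFun X)), h.1 x = g.1 x
    rw [iSup_insert, iSup_singleton, sup_eq_right.2 (hfg x)]
  have := hμ.2.2 {f, g} (Set.insert_nonempty f {g}) (directedOn_pair hfg)
  rw [hsup, iSup_insert, iSup_singleton] at this
  exact this ▸ le_sup_left

theorem zero_mem : (0 : LSCFun X → ℝ≥0∞) ∈ ValuationPD X := by
  refine ⟨fun _ _ => by simp, fun _ _ => by simp, fun S hS _ => ?_⟩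
  have := hS.to_subtype
  simp

theorem add_mem (hμ : μ ∈ ValuationPD X) (hν : ν ∈ ValuationPD X) : μ + ν ∈ ValuationPD X := by
  refine ⟨fun f g => by simp only [Pi.add_apply, hμ.1, hν.1]; ring,
    fun r f => by simp only [Pi.add_apply, hμ.2.1, hν.2.1]; ring, fun S hS hdir => ?_⟩
  simp only [Pi.add_apply, hμ.2.2 S hS hdir, hν.2.2 S hS hdir, iSup_subtype']
  refine ENNReal.iSup_add_iSup fun f g => ?_
  obtain ⟨h, hS, hfh, hgh⟩ := hdir f.1 f.2 g.1 g.2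
  exact ⟨⟨h, hS⟩, add_le_add (monotone hμ hfh) (monotone hν hgh)⟩

theorem smul_mem (r : ℝ≥0) (hμ : μ ∈ ValuationPD X) : r • μ ∈ ValuationPD X := by
  refine ⟨fun f g => by simp only [Pi.smul_apply, ENNReal.smul_def, hμ.1]; ring,
    fun s f => by simp only [Pi.smul_apply, ENNReal.smul_def, hμ.2.1]; ring, fun S hS hdir => ?_⟩
  simp only [Pi.smul_apply, ENNReal.smul_def, smul_eq_mul, hμ.2.2 S hS hdir, iSup_subtype',
    ENNReal.mul_iSup]

def submodule (X : Type*) [TopologicalSpace X] : Submodule ℝ≥0 (LSCFun X → ℝ≥0∞) where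
  carrier := ValuationPD X
  zero_mem' := zero_mem
  add_mem' := add_mem
  smul_mem' r _ := smul_mem r

noncomputable instance : AddCommMonoid (ValuationPD X) := (submodule X).addCommMonoid

noncomputable instance : Module ℝ≥0 (ValuationPD X) := (submodule X).module

@[simps]
def eval (f : LSCFun X) : ValuationPD X →ₗ[ℝ≥0] ℝ≥0∞ where
  toFun μ := μ.1 f
  map_add' _ _ := rfl
  map_smul' _ _ := rfl

theorem eval_add (f g : LSCFun X) : eval (f + g) = eval f + eval g :=
  LinearMap.ext fun μ => μ.2.1 f g

theorem eval_smul (r : ℝ≥0) (f : LSCFun X) : eval (r • f) = r • eval f :=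
  LinearMap.ext fun μ => μ.2.2.1 r f

end ValuationPD

theorem sublinear_lsc_eq_sup_evaluations_d_dense_general {X : Type*} [TopologicalSpace X]
    (C₀ : Set (LSCFun X))
    (hC₀_add : ∀ f ∈ C₀, ∀ g ∈ C₀, f + g ∈ C₀)
    (hC₀_smul : ∀ (r : ℝ≥0), ∀ f ∈ C₀, r • f ∈ C₀)
    (φ : ValuationPD X → ℝ≥0∞)
    (hφ_subadd : ∀ μ ν σ : ValuationPD X, σ.1 = μ.1 + ν.1 → φ σ ≤ φ μ + φ ν)
    (hφ_hom : ∀ (r : ℝ≥0) (μ σ : ValuationPD X),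
      σ.1 = (fun f => (r : ℝ≥0∞) * μ.1 f) → φ σ = (r : ℝ≥0∞) * φ μ)
    (hφ_lsc : ∀ r : ℝ≥0,
      IsOpen[TopologicalSpace.generateFrom
          {S | ∃ f ∈ C₀, ∃ s : ℝ≥0, S = {μ : ValuationPD X | (s : ℝ≥0∞) < μ.1 f}}]
        {μ : ValuationPD X | (r : ℝ≥0∞) < φ μ}) :
    ∀ μ : ValuationPD X,
      φ μ = ⨆ (f : C₀) (_ : ∀ ν : ValuationPD X, ν.1 f.1 ≤ φ ν), μ.1 f.1 := by
  intro μ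
  refine le_antisymm (ENNReal.le_of_forall_nnreal_lt fun r hr => ?_) (iSup₂_le fun f hf => hf μ)
  have hsubbasis : {S | ∃ ℓ ∈ ValuationPD.eval '' C₀, ∃ s : ℝ≥0, S = {ν | (s : ℝ≥0∞) < ℓ ν}} =
      {S | ∃ f ∈ C₀, ∃ s : ℝ≥0, S = {ν : ValuationPD X | (s : ℝ≥0∞) < ν.1 f}} := by
    ext S
    simp
  obtain ⟨_, ⟨f, hf, rfl⟩, hfφ, hrf⟩ := exists_mem_le_and_le_apply_of_lt
    (Set.forall_mem_image.2 fun f hf => Set.forall_mem_image.2 fun g hg =>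
      ⟨f + g, hC₀_add f hf g hg, ValuationPD.eval_add f g⟩)
    (fun k => Set.forall_mem_image.2 fun f hf =>
      ⟨k • f, hC₀_smul k f hf, ValuationPD.eval_smul k f⟩)
    (fun μ ν => hφ_subadd μ ν _ rfl) (fun k μ => hφ_hom k μ _ rfl) (hsubbasis ▸ hφ_lsc r) hr
  exact le_iSup₂_of_le ⟨f, hf⟩ hfφ hrf

/-- For a d-dense subcone `C₀ ⊆ 𝓛X`, every sublinear functional on `𝓥X` that
is lower semicontinuous for the weak upper topology `w(𝓥X, C₀)` is the
pointwise supremum of the evaluations at elements of `C₀` lying below it. -/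
theorem sublinear_lsc_eq_sup_evaluations_d_dense {X : Type*} [TopologicalSpace X]
    (C₀ : Set (LSCFun X))
    (hC₀_add : ∀ f ∈ C₀, ∀ g ∈ C₀, f + g ∈ C₀)
    (hC₀_smul : ∀ (r : ℝ≥0), ∀ f ∈ C₀, r • f ∈ C₀)
    (hC₀_dense : ∀ S : Set (LSCFun X), C₀ ⊆ S →
      (∀ f ∈ S, ∀ g ∈ S, f + g ∈ S) →
      (∀ (r : ℝ≥0), ∀ f ∈ S, r • f ∈ S) →
      (∀ T ⊆ S, T.Nonempty → DirectedOn (· ≤ ·) T → LSCFun.supOf T ∈ S) →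
      S = Set.univ)
    (φ : ValuationPD X → ℝ≥0∞)
    (hφ_subadd : ∀ μ ν σ : ValuationPD X, σ.1 = μ.1 + ν.1 → φ σ ≤ φ μ + φ ν)
    (hφ_hom : ∀ (r : ℝ≥0) (μ σ : ValuationPD X),
      σ.1 = (fun f => (r : ℝ≥0∞) * μ.1 f) → φ σ = (r : ℝ≥0∞) * φ μ)
    (hφ_lsc : ∀ r : ℝ≥0,
      IsOpen[TopologicalSpace.generateFrom
          {S | ∃ f ∈ C₀, ∃ s : ℝ≥0, S = {μ : ValuationPD X | (s : ℝ≥0∞) < μ.1 f}}]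
        {μ : ValuationPD X | (r : ℝ≥0∞) < φ μ}) :
    ∀ μ : ValuationPD X,
      φ μ = ⨆ (f : C₀) (_ : ∀ ν : ValuationPD X, ν.1 f.1 ≤ φ ν), μ.1 f.1 :=
  sublinear_lsc_eq_sup_evaluations_d_dense_general C₀ hC₀_add hC₀_smul φ hφ_subadd hφ_hom hφ_lsc
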